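/- arXiv:2604.18813 — 7 statements merged into one kernel-verified Lean document; each statement's English description precedes it below -/
import Mathlib

section
/- Let X ⊆ ℝⁿ be nonempty, closed, and convex, let S : X → ℝⁿ be σ-strongly monotone (σ > 0), and let Φ : X → ℝⁿ. Suppose x ∈ X, y ∈ X, and S(x) − S(y) − Φ(y) ∈ N_X(y) (i.e., y is the target point T(x)). Then for every x̄ ∈ X, ⟨S(y) − S(x), x̄ − x⟩ ≥ ⟨Φ(y), y − x̄⟩ + σ‖y − x‖². -/
open scoped RealInnerProductSpace

/-- Let `X ⊆ ℝⁿ` be nonempty, closed, convex, `S : X → ℝⁿ` be `σ`-strongly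
monotone (`σ > 0`), and `Φ : X → ℝⁿ`.  If `x, y ∈ X` and
`S x - S y - Φ y ∈ N_X(y)` (i.e. `y = T(x)` is the target point), then for every `x̄ ∈ X`,
`⟪S y - S x, x̄ - x⟫ ≥ ⟪Φ y, y - x̄⟫ + σ‖y - x‖²`. -/
theorem target_point_key_inequality
    (n : ℕ) (X : Set (EuclideanSpace ℝ (Fin n)))
    (hXne : X.Nonempty) (hXcl : IsClosed X) (hXcv : Convex ℝ X)
    (S Φ : EuclideanSpace ℝ (Fin n) → EuclideanSpace ℝ (Fin n))
    (σ : ℝ) (hσ : 0 < σ)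
    (hS : ∀ a ∈ X, ∀ b ∈ X, σ * ‖a - b‖ ^ 2 ≤ ⟪S a - S b, a - b⟫)
    (x y : EuclideanSpace ℝ (Fin n)) (hx : x ∈ X) (hy : y ∈ X)
    (hNC : ∀ u ∈ X, ⟪S x - S y - Φ y, u - y⟫ ≤ 0) :
    ∀ xbar ∈ X, ⟪Φ y, y - xbar⟫ + σ * ‖y - x‖ ^ 2 ≤ ⟪S y - S x, xbar - x⟫ := by
  intro xbar hxbar
  have h1 := hNC xbar hxbar
  have h2 := hS y hy x hx
  have e1 : ⟪S x - S y - Φ y, xbar - y⟫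
      = ⟪S x - S y, xbar - y⟫ - ⟪Φ y, xbar - y⟫ := by
    rw [inner_sub_left]
  have e2 : ⟪S y - S x, xbar - x⟫
      = ⟪S y - S x, xbar - y⟫ + ⟪S y - S x, y - x⟫ := by
    rw [← inner_add_right]; congr 1; abel
  have e3 : ⟪S y - S x, xbar - y⟫ = -⟪S x - S y, xbar - y⟫ := by
    rw [← inner_neg_left]; congr 1; abel
  have e4 : ⟪Φ y, y - xbar⟫ = -⟪Φ y, xbar - y⟫ := by
    rw [← inner_neg_right]; congr 1; abel
  linarith
end

section
/- Let X ⊆ ℝⁿ be nonempty, closed, and convex, let S : X → ℝⁿ be σ-strongly monotone (σ > 0), let Φ : X → ℝⁿ, let α > 0, β ≥ 0, and let x̄ ∈ X. Suppose x ∈ X and y ∈ X satisfy S(x) − S(y) − Φ(y) ∈ N_X(y), and suppose the relaxed stability condition holds at x: α(σ‖y − x‖² + ⟨Φ(y), y − x̄⟩) + β⟨Φ(x), x − x̄⟩ > 0. Then α⟨S(y) − S(x), x̄ − x⟩ + β⟨Φ(x), x − x̄⟩ > 0; that is, the Lyapunov derivative −α⟨S(y) − S(x), x̄ − x⟩ −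 β⟨Φ(x), x − x̄⟩ of the target mirror descent dynamics is strictly negative at x. -/
open scoped RealInnerProductSpace

/-- Under the target-point relation `S x - S y - Φ y ∈ N_X(y)` and the relaxed
variational stability condition
`α(σ‖y - x‖² + ⟪Φ y, y - x̄⟫) + β⟪Φ x, x - x̄⟫ > 0`,
the Lyapunov derivative of TMD is strictly negative, i.e.
`α⟪S y - S x, x̄ - x⟫ + β⟪Φ x, x - x̄⟫ > 0`. -/
theorem tmd_lyapunov_strictly_decreasing_relaxed
    (n : ℕ) (X : Set (EuclideanSpace ℝ (Fin n)))
    (hXne : X.Nonempty) (hXcl : IsClosed X) (hXcv : Convex ℝ X)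
    (S Φ : EuclideanSpace ℝ (Fin n) → EuclideanSpace ℝ (Fin n))
    (σ : ℝ) (hσ : 0 < σ)
    (hS : ∀ a ∈ X, ∀ b ∈ X, σ * ‖a - b‖ ^ 2 ≤ ⟪S a - S b, a - b⟫)
    (α β : ℝ) (hα : 0 < α) (hβ : 0 ≤ β)
    (xbar : EuclideanSpace ℝ (Fin n)) (hxbar : xbar ∈ X)
    (x y : EuclideanSpace ℝ (Fin n)) (hx : x ∈ X) (hy : y ∈ X)
    (hNC : ∀ u ∈ X, ⟪S x - S y - Φ y, u - y⟫ ≤ 0)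
    (hrelax : 0 < α * (σ * ‖y - x‖ ^ 2 + ⟪Φ y, y - xbar⟫) + β * ⟪Φ x, x - xbar⟫) :
    0 < α * ⟪S y - S x, xbar - x⟫ + β * ⟪Φ x, x - xbar⟫ := by
  have h1 := hNC xbar hxbar
  have h2 := hS y hy x hx
  have key : α * (σ * ‖y - x‖ ^ 2 + ⟪Φ y, y - xbar⟫) ≤ α * ⟪S y - S x, xbar - x⟫ := by
    have e1 : ⟪S y - S x, xbar - x⟫ = ⟪S y - S x, xbar - y⟫ + ⟪S y - S x, y - x⟫ := by
      rw [← inner_add_right]; congr 1; abel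
    have e2 : ⟪S x - S y - Φ y, xbar - y⟫ = (⟪Φ y, y - xbar⟫ - ⟪S y - S x, xbar - y⟫) := by
      rw [inner_sub_left, inner_sub_left]
      have : ⟪Φ y, y - xbar⟫ = -⟪Φ y, xbar - y⟫ := by
        rw [← inner_neg_right]; congr 1; abel
      rw [this, inner_sub_left]; ring
    rw [e2] at h1
    have : σ * ‖y - x‖ ^ 2 + ⟪Φ y, y - xbar⟫ ≤ ⟪S y - S x, xbar - x⟫ := by
      rw [e1]; linarith
    exact mul_le_mul_of_nonneg_left this hα.le
  linarith
end

section
/- Let X ⊆ ℝⁿ be nonempty, closed, and convex, and let h : ℝⁿ → ℝ be differentiable. Let z, x : [0,∞) → ℝⁿ be differentiable curves with x(t) ∈ X and ∇h(x(t)) = z(t) for all t ≥ 0 (so x(t) = ∇h*(z(t))). Let S : X → ℝⁿ be σ-strongly monotone (σ > 0), Φ : X → ℝⁿ, α > 0, β ≥ 0, and let y : [0,∞) → X be a curve such that S(x(t)) − S(y(t)) − Φ(y(t)) ∈ N_X(y(t)) and ż(t) = α(S(y(t)) − S(x(t))) − βΦ(x(t)) for all t (the target mirror descent dynamics). Suppose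 x̄ ∈ X is variationally stable with respect to Φ and that t ↦ ⟨Φ(y(t)), y(t) − x̄⟩ and t ↦ ‖y(t) − x(t)‖² are locally integrable. Then for all 0 ≤ t₁ ≤ t₂: D_h(x̄, x(t₂)) ≤ D_h(x̄, x(t₁)) − ασ ∫_{t₁}^{t₂} ‖y(s) − x(s)‖² ds. In particular, t ↦ D_h(x̄, x(t)) is nonincreasing. -/
/-!
Along the dynamics, `V t = h x̄ - h (x t) - ⟪z t, x̄ - x t⟫` has derivative `⟪ż t, x t - x̄⟫`,
because `∇h (x t) = z t` cancels the terms containing `ẋ`. Splitting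
`x - x̄ = (x - y) + (y - x̄)`, strong monotonicity bounds the first part by `-σ ‖y - x‖²`, and the
normal-cone condition tested at `u = x̄` together with variational stability at `y` makes the second
part nonpositive; variational stability at `x` handles the `-β Φ x` term. Integrating
`V' ≤ -α σ ‖y - x‖²` gives the bound.
-/

open scoped RealInnerProductSpace
open Set

section

variable {E : Type*} [NormedAddCommGroup E] [InnerProductSpace ℝ E]

theorem hasDerivAt_bregman_along_mirror [CompleteSpace E] {h : E → ℝ} {x z : ℝ → E}
    {x' z' : E} {t : ℝ} (p : E) (hgrad : HasGradientAt h (z t) (x t)) (hx : HasDerivAt x x' t)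
    (hz : HasDerivAt z z' t) :
    HasDerivAt (fun s => h p - h (x s) - ⟪z s, p - x s⟫) ⟪z', x t - p⟫ t := by
  have hhx : HasDerivAt (fun s => h (x s)) ⟪z t, x'⟫ t :=
    ((hasGradientAt_iff_hasFDerivAt.mp hgrad).comp_hasDerivAt t hx).congr_deriv (by simp)
  have hpx : HasDerivAt (fun s => p - x s) (-x') t :=
    ((hasDerivAt_const t p).sub hx).congr_deriv (zero_sub x')
  refine (((hasDerivAt_const t (h p)).sub hhx).sub (hz.inner ℝ hpx)).congr_deriv ?_
  simp only [inner_neg_right, inner_sub_right]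
  ring

theorem bregman_along_mirror_le_add_integral [CompleteSpace E] {h : E → ℝ}
    {x z x' z' : ℝ → E} {g : ℝ → ℝ} {a b : ℝ} (p : E) (hab : a ≤ b)
    (hgrad : ∀ t ∈ Icc a b, HasGradientAt h (z t) (x t))
    (hx : ∀ t ∈ Icc a b, HasDerivAt x (x' t) t) (hz : ∀ t ∈ Icc a b, HasDerivAt z (z' t) t)
    (hbound : ∀ t ∈ Icc a b, ⟪z' t, x t - p⟫ ≤ g t)
    (hg : IntervalIntegrable g MeasureTheory.volume a b) :
    h p - h (x b) - ⟪z b, p - x b⟫ ≤ h p - h (x a) - ⟪z a, p - x a⟫ + ∫ t in a..b, g t := by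
  have hV : ∀ t ∈ Icc a b, HasDerivAt (fun s => h p - h (x s) - ⟪z s, p - x s⟫)
      ⟪z' t, x t - p⟫ t := fun t ht =>
    hasDerivAt_bregman_along_mirror p (hgrad t ht) (hx t ht) (hz t ht)
  have := intervalIntegral.sub_le_integral_of_hasDeriv_right_of_le hab
    (fun t ht => (hV t ht).continuousAt.continuousWithinAt)
    (fun t ht => (hV t (Ioo_subset_Icc_self ht)).hasDerivWithinAt)
    ((intervalIntegrable_iff_integrableOn_Icc_of_le hab).mp hg)
    (fun t ht => hbound t (Ioo_subset_Icc_self ht))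
  linarith

theorem inner_sub_le_neg_mul_sq_of_target {S Φ : E → E} {σ : ℝ} {x y xbar : E}
    (hS : σ * ‖y - x‖ ^ 2 ≤ ⟪S y - S x, y - x⟫)
    (hNC : ⟪S x - S y - Φ y, xbar - y⟫ ≤ 0) (hVS : 0 ≤ ⟪Φ y, y - xbar⟫) :
    ⟪S y - S x, x - xbar⟫ ≤ -(σ * ‖y - x‖ ^ 2) := by
  have hsplit : ⟪S y - S x, x - xbar⟫ = -⟪S y - S x, y - x⟫ + ⟪S y - S x, y - xbar⟫ := by
    rw [← inner_neg_right, ← inner_add_right]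
    congr 1
    abel
  have hNC' : ⟪S x - S y - Φ y, xbar - y⟫ = ⟪S y - S x, y - xbar⟫ + ⟪Φ y, y - xbar⟫ := by
    rw [← inner_neg_neg, ← inner_add_left]
    congr 1 <;> abel
  linarith

theorem inner_tmd_field_le_neg_mul_sq {S Φ : E → E} {σ α β : ℝ} {x y xbar : E} (hα : 0 ≤ α)
    (hβ : 0 ≤ β) (hS : σ * ‖y - x‖ ^ 2 ≤ ⟪S y - S x, y - x⟫)
    (hNC : ⟪S x - S y - Φ y, xbar - y⟫ ≤ 0) (hVSy : 0 ≤ ⟪Φ y, y - xbar⟫)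
    (hVSx : 0 ≤ ⟪Φ x, x - xbar⟫) :
    ⟪α • (S y - S x) - β • Φ x, x - xbar⟫ ≤ -(α * σ) * ‖y - x‖ ^ 2 := by
  have hy := inner_sub_le_neg_mul_sq_of_target hS hNC hVSy
  rw [inner_sub_left, real_inner_smul_left, real_inner_smul_left]
  nlinarith [mul_le_mul_of_nonneg_left hy hα, mul_nonneg hβ hVSx]

end

theorem tmd_bregman_lyapunov_decrease_general
    (n : ℕ) (X : Set (EuclideanSpace ℝ (Fin n)))
    (h : EuclideanSpace ℝ (Fin n) → ℝ)
    (gh : EuclideanSpace ℝ (Fin n) → EuclideanSpace ℝ (Fin n))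
    (hgrad : ∀ w, HasGradientAt h (gh w) w)
    (z x y : ℝ → EuclideanSpace ℝ (Fin n))
    (z' x' : ℝ → EuclideanSpace ℝ (Fin n))
    (hz : ∀ t, 0 ≤ t → HasDerivAt z (z' t) t)
    (hx : ∀ t, 0 ≤ t → HasDerivAt x (x' t) t)
    (hxX : ∀ t, 0 ≤ t → x t ∈ X)
    (hyX : ∀ t, 0 ≤ t → y t ∈ X)
    (hmirror : ∀ t, 0 ≤ t → gh (x t) = z t)
    (S Φ : EuclideanSpace ℝ (Fin n) → EuclideanSpace ℝ (Fin n))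
    (σ : ℝ) (hσ : 0 < σ)
    (hS : ∀ a ∈ X, ∀ b ∈ X, σ * ‖a - b‖ ^ 2 ≤ ⟪S a - S b, a - b⟫)
    (α β : ℝ) (hα : 0 < α) (hβ : 0 ≤ β)
    (hNC : ∀ t, 0 ≤ t → ∀ u ∈ X, ⟪S (x t) - S (y t) - Φ (y t), u - y t⟫ ≤ 0)
    (hdyn : ∀ t, 0 ≤ t → z' t = α • (S (y t) - S (x t)) - β • Φ (x t))
    (xbar : EuclideanSpace ℝ (Fin n)) (hxbar : xbar ∈ X)
    (hVS : ∀ w ∈ X, 0 ≤ ⟪Φ w, w - xbar⟫)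
    (hint2 : ∀ t₁ t₂ : ℝ, IntervalIntegrable (fun s => ‖y s - x s‖ ^ 2)
      MeasureTheory.volume t₁ t₂) :
    (∀ t₁ t₂ : ℝ, 0 ≤ t₁ → t₁ ≤ t₂ →
      (h xbar - h (x t₂) - ⟪gh (x t₂), xbar - x t₂⟫) ≤
        (h xbar - h (x t₁) - ⟪gh (x t₁), xbar - x t₁⟫)
          - α * σ * ∫ s in t₁..t₂, ‖y s - x s‖ ^ 2) ∧
      AntitoneOn (fun t => h xbar - h (x t) - ⟪gh (x t), xbar - x t⟫) (Set.Ici 0) := by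
  have hdecay : ∀ t₁ t₂ : ℝ, 0 ≤ t₁ → t₁ ≤ t₂ →
      (h xbar - h (x t₂) - ⟪gh (x t₂), xbar - x t₂⟫) ≤
        (h xbar - h (x t₁) - ⟪gh (x t₁), xbar - x t₁⟫)
          - α * σ * ∫ s in t₁..t₂, ‖y s - x s‖ ^ 2 := by
    intro t₁ t₂ ht₁ h12
    have hnn : ∀ t ∈ Icc t₁ t₂, 0 ≤ t := fun t ht => ht₁.trans ht.1
    have := bregman_along_mirror_le_add_integral xbar h12
      (fun t ht => hmirror t (hnn t ht) ▸ hgrad (x t))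
      (fun t ht => hx t (hnn t ht)) (fun t ht => hz t (hnn t ht))
      (fun t ht => hdyn t (hnn t ht) ▸ inner_tmd_field_le_neg_mul_sq hα.le hβ
        (hS _ (hyX t (hnn t ht)) _ (hxX t (hnn t ht))) (hNC t (hnn t ht) xbar hxbar)
        (hVS _ (hyX t (hnn t ht))) (hVS _ (hxX t (hnn t ht))))
      ((hint2 t₁ t₂).const_mul (-(α * σ)))
    rw [intervalIntegral.integral_const_mul] at this
    rw [hmirror t₁ ht₁, hmirror t₂ (ht₁.trans h12)]
    linarith
  refine ⟨hdecay, fun t₁ ht₁ t₂ _ h12 => ?_⟩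
  have hint : 0 ≤ ∫ s in t₁..t₂, ‖y s - x s‖ ^ 2 :=
    intervalIntegral.integral_nonneg h12 fun s _ => by positivity
  have := hdecay t₁ t₂ ht₁ h12
  nlinarith [mul_nonneg (mul_pos hα hσ).le hint]

/-- Along the target mirror descent dynamics
`ż(t) = α(S(y(t)) - S(x(t))) - βΦ(x(t))`, `x(t) = ∇h*(z(t))` (i.e. `∇h(x(t)) = z(t)`),
with `y(t)` the target point of `x(t)` and `x̄` variationally stable w.r.t. `Φ`, the
Bregman divergence `D_h(x̄, x(t))` satisfies, for all `0 ≤ t₁ ≤ t₂`,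
`D_h(x̄, x(t₂)) ≤ D_h(x̄, x(t₁)) - ασ ∫_{t₁}^{t₂} ‖y(s) - x(s)‖² ds`;
in particular `t ↦ D_h(x̄, x(t))` is nonincreasing on `[0, ∞)`. -/
theorem tmd_bregman_lyapunov_decrease
    (n : ℕ) (X : Set (EuclideanSpace ℝ (Fin n)))
    (hXne : X.Nonempty) (hXcl : IsClosed X) (hXcv : Convex ℝ X)
    (h : EuclideanSpace ℝ (Fin n) → ℝ)
    (gh : EuclideanSpace ℝ (Fin n) → EuclideanSpace ℝ (Fin n))
    (hgrad : ∀ w, HasGradientAt h (gh w) w)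
    (z x y : ℝ → EuclideanSpace ℝ (Fin n))
    (z' x' : ℝ → EuclideanSpace ℝ (Fin n))
    (hz : ∀ t, 0 ≤ t → HasDerivAt z (z' t) t)
    (hx : ∀ t, 0 ≤ t → HasDerivAt x (x' t) t)
    (hxX : ∀ t, 0 ≤ t → x t ∈ X)
    (hyX : ∀ t, 0 ≤ t → y t ∈ X)
    (hmirror : ∀ t, 0 ≤ t → gh (x t) = z t)
    (S Φ : EuclideanSpace ℝ (Fin n) → EuclideanSpace ℝ (Fin n))
    (σ : ℝ) (hσ : 0 < σ)
    (hS : ∀ a ∈ X, ∀ b ∈ X, σ * ‖a - b‖ ^ 2 ≤ ⟪S a - S b, a - b⟫)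
    (α β : ℝ) (hα : 0 < α) (hβ : 0 ≤ β)
    (hNC : ∀ t, 0 ≤ t → ∀ u ∈ X, ⟪S (x t) - S (y t) - Φ (y t), u - y t⟫ ≤ 0)
    (hdyn : ∀ t, 0 ≤ t → z' t = α • (S (y t) - S (x t)) - β • Φ (x t))
    (xbar : EuclideanSpace ℝ (Fin n)) (hxbar : xbar ∈ X)
    (hVS : ∀ w ∈ X, 0 ≤ ⟪Φ w, w - xbar⟫)
    (hint1 : ∀ t₁ t₂ : ℝ, IntervalIntegrable (fun s => ⟪Φ (y s), y s - xbar⟫)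
      MeasureTheory.volume t₁ t₂)
    (hint2 : ∀ t₁ t₂ : ℝ, IntervalIntegrable (fun s => ‖y s - x s‖ ^ 2)
      MeasureTheory.volume t₁ t₂) :
    (∀ t₁ t₂ : ℝ, 0 ≤ t₁ → t₁ ≤ t₂ →
      (h xbar - h (x t₂) - ⟪gh (x t₂), xbar - x t₂⟫) ≤
        (h xbar - h (x t₁) - ⟪gh (x t₁), xbar - x t₁⟫)
          - α * σ * ∫ s in t₁..t₂, ‖y s - x s‖ ^ 2) ∧
      AntitoneOn (fun t => h xbar - h (x t) - ⟪gh (x t), xbar - x t⟫) (Set.Ici 0) :=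
  tmd_bregman_lyapunov_decrease_general n X h gh hgrad z x y z' x' hz hx hxX hyX hmirror S Φ σ hσ hS
    α β hα hβ hNC hdyn xbar hxbar hVS hint2
end

section
/- Let C ⊆ ℝⁿ be nonempty and closed, let h : ℝⁿ → ℝ be continuously differentiable and μ-strongly convex (μ > 0), and let x : [0,∞) → ℝⁿ be continuous. Suppose that for every c ∈ C the function t ↦ D_h(c, x(t)) is nonincreasing, and that there exist times t_k → ∞ and a point x* ∈ C with x(t_k) → x*. Then x(t) → x* as t → ∞; in particular, a trajectory that is Bregman-Fejér monotone with respect to C and asymptotically approaches C converges to a single point of C. -/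
/-!
Strong convexity bounds the Bregman divergence below by `μ/2 ‖x* - x(t)‖²`, so it suffices that
`t ↦ D_h(x*, x(t))` tends to `0`. This function is nonincreasing by Fejér monotonicity (with
`c = x*`), and along `t_k` it tends to `D_h(x*, x*) = 0` because `h` is `C¹`; a monotone function
with a subsequential limit converges to it.
-/

open scoped RealInnerProductSpace

open Set Filter Topology

lemma AntitoneOn.tendsto_atTop_of_tendsto_comp {α β ι : Type*} [Preorder α]
    [LinearOrder β] [TopologicalSpace β] [OrderTopology β] {f : α → β} {a : α}
    (hf : AntitoneOn f (Ici a)) {l : Filter ι} [l.NeBot] {u : ι → α} (hu_ge : ∀ i, a ≤ u i)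
    (hu : Tendsto u l atTop) {b : β} (hfu : Tendsto (f ∘ u) l (𝓝 b)) :
    Tendsto f atTop (𝓝 b) := by
  have hb_le : ∀ t ≥ a, b ≤ f t := fun t ht =>
    le_of_tendsto hfu <| (hu.eventually_ge_atTop t).mono fun i hi => hf ht (hu_ge i) hi
  refine tendsto_order.2 ⟨fun b' hb' => ?_, fun b' hb' => ?_⟩
  · filter_upwards [eventually_ge_atTop a] with t ht using hb'.trans_le (hb_le t ht)
  · obtain ⟨i, hi⟩ := (hfu.eventually (gt_mem_nhds hb')).exists
    filter_upwards [eventually_ge_atTop (u i)] with t ht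
    exact (hf (hu_ge i) ((hu_ge i).trans ht) ht).trans_lt hi

lemma tendsto_of_sq_norm_sub_le {E ι : Type*} [SeminormedAddCommGroup E] {l : Filter ι}
    {x : ι → E} {c : E} {D : ι → ℝ} {μ : ℝ} (hμ : 0 < μ)
    (hle : ∀ i, μ / 2 * ‖c - x i‖ ^ 2 ≤ D i) (hD : Tendsto D l (𝓝 0)) :
    Tendsto x l (𝓝 c) := by
  have hsq : Tendsto (fun i => ‖x i - c‖ ^ 2) l (𝓝 0) := by
    refine squeeze_zero (fun i => by positivity) (fun i => ?_)
      (by simpa using hD.const_mul (2 / μ))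
    rw [norm_sub_rev, div_mul_eq_mul_div, le_div_iff₀ hμ]
    linarith [hle i]
  rw [tendsto_iff_norm_sub_tendsto_zero]
  simpa using hsq.sqrt

lemma ConvexOn.add_fderiv_le {E : Type*} [NormedAddCommGroup E] [NormedSpace ℝ E] {s : Set E}
    {f : E → ℝ} (hf : ConvexOn ℝ s f) {f' : E →L[ℝ] ℝ}
    {y c : E} (hy : y ∈ s) (hc : c ∈ s) (hf' : HasFDerivAt f f' y) :
    f y + f' (c - y) ≤ f c := by
  set L : ℝ →ᵃ[ℝ] E := AffineMap.lineMap y c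
  have hφ : HasDerivAt (f ∘ L) (f' (c - y)) 0 :=
    (by simpa [L] using hf' : HasFDerivAt f f' (L 0)).comp_hasDerivAt 0
      AffineMap.hasDerivAt_lineMap
  have hslope := (hf.comp_affineMap L).le_slope_of_hasDerivAt (x := 0) (y := 1) (by simpa [L])
    (by simpa [L]) one_pos hφ
  simp only [slope_def_field, Function.comp_apply, AffineMap.lineMap_apply_zero,
    AffineMap.lineMap_apply_one, sub_zero, div_one, L] at hslope
  linarith

section InnerProductSpace

variable {E : Type*} [NormedAddCommGroup E] [InnerProductSpace ℝ E] [CompleteSpace E]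

/-- The Bregman divergence `D_h(c, y)`, with `g` standing for the gradient of `h`. -/
def bregmanDiv (h : E → ℝ) (g : E → E) (c y : E) : ℝ :=
  h c - h y - ⟪g y, c - y⟫

lemma sq_norm_sub_le_bregmanDiv {h : E → ℝ} {μ : ℝ}
    (hstrong : ConvexOn ℝ univ (fun w => h w - μ / 2 * ‖w‖ ^ 2))
    {g : E → E} {y : E} (hg : HasGradientAt h (g y) y) (c : E) :
    μ / 2 * ‖c - y‖ ^ 2 ≤ bregmanDiv h g c y := by
  have hf' := (hasGradientAt_iff_hasFDerivAt.mp hg).sub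
    ((hasStrictFDerivAt_norm_sq y).hasFDerivAt.const_mul (μ / 2))
  have key := hstrong.add_fderiv_le (mem_univ y) (mem_univ c) hf'
  have hnorm : ‖c‖ ^ 2 = ‖c - y‖ ^ 2 + 2 * ⟪y, c - y⟫ + ‖y‖ ^ 2 := by
    rw [real_inner_comm, ← norm_add_sq_real, sub_add_cancel]
  simp only [sub_apply, InnerProductSpace.toDual_apply_apply, smul_apply, innerSL_apply_apply,
    smul_eq_mul, nsmul_eq_mul, hnorm] at key
  rw [bregmanDiv]
  linarith

lemma ContDiff.continuous_of_hasGradientAt {h : E → ℝ} (hh : ContDiff ℝ 1 h) {g : E → E}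
    (hg : ∀ w, HasGradientAt h (g w) w) : Continuous g := by
  rw [← gradient_eq hg]
  exact (InnerProductSpace.toDual ℝ E).symm.continuous.comp (hh.continuous_fderiv one_ne_zero)

lemma ContDiff.continuous_bregmanDiv {h : E → ℝ} (hh : ContDiff ℝ 1 h) {g : E → E}
    (hg : ∀ w, HasGradientAt h (g w) w) (c : E) : Continuous (bregmanDiv h g c) :=
  (continuous_const.sub hh.continuous).sub
    ((hh.continuous_of_hasGradientAt hg).inner (continuous_const.sub continuous_id))

end InnerProductSpace

theorem bregman_fejer_monotone_convergence_general
    (n : ℕ) (C : Set (EuclideanSpace ℝ (Fin n)))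
    (h : EuclideanSpace ℝ (Fin n) → ℝ)
    (hh : ContDiff ℝ 1 h)
    (μ : ℝ) (hμ : 0 < μ)
    (hstrong : ConvexOn ℝ Set.univ (fun w => h w - μ / 2 * ‖w‖ ^ 2))
    (gh : EuclideanSpace ℝ (Fin n) → EuclideanSpace ℝ (Fin n))
    (hgrad : ∀ w, HasGradientAt h (gh w) w)
    (x : ℝ → EuclideanSpace ℝ (Fin n))
    (hfejer : ∀ c ∈ C,
      AntitoneOn (fun t => h c - h (x t) - ⟪gh (x t), c - x t⟫) (Set.Ici 0))
    (tk : ℕ → ℝ) (htk0 : ∀ k, 0 ≤ tk k)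
    (htk : Filter.Tendsto tk Filter.atTop Filter.atTop)
    (xstar : EuclideanSpace ℝ (Fin n)) (hxstar : xstar ∈ C)
    (hconv : Filter.Tendsto (fun k => x (tk k)) Filter.atTop (nhds xstar)) :
    Filter.Tendsto x Filter.atTop (nhds xstar) := by
  have hD_tk : Tendsto (fun k => bregmanDiv h gh xstar (x (tk k))) atTop (𝓝 0) := by
    have h_self : bregmanDiv h gh xstar xstar = 0 := by simp [bregmanDiv]
    exact h_self ▸ ((hh.continuous_bregmanDiv hgrad xstar).tendsto xstar).comp hconv
  have hD : Tendsto (fun t => bregmanDiv h gh xstar (x t)) atTop (𝓝 0) :=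
    (hfejer xstar hxstar).tendsto_atTop_of_tendsto_comp htk0 htk hD_tk
  exact tendsto_of_sq_norm_sub_le hμ
    (fun t => sq_norm_sub_le_bregmanDiv hstrong (hgrad (x t)) xstar) hD

/-- Let `C ⊆ ℝⁿ` be nonempty and closed, `h : ℝⁿ → ℝ` be C¹ and `μ`-strongly
convex (`μ > 0`), and `x : [0,∞) → ℝⁿ` be continuous.  If the trajectory is
Bregman–Fejér monotone w.r.t. `C` (i.e. `t ↦ D_h(c, x(t))` is nonincreasing for every
`c ∈ C`) and some time sequence `t_k → ∞` satisfies `x(t_k) → x* ∈ C`, then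
`x(t) → x*` as `t → ∞`. -/
theorem bregman_fejer_monotone_convergence
    (n : ℕ) (C : Set (EuclideanSpace ℝ (Fin n)))
    (hCne : C.Nonempty) (hCcl : IsClosed C)
    (h : EuclideanSpace ℝ (Fin n) → ℝ)
    (hh : ContDiff ℝ 1 h)
    (μ : ℝ) (hμ : 0 < μ)
    (hstrong : ConvexOn ℝ Set.univ (fun w => h w - μ / 2 * ‖w‖ ^ 2))
    (gh : EuclideanSpace ℝ (Fin n) → EuclideanSpace ℝ (Fin n))
    (hgrad : ∀ w, HasGradientAt h (gh w) w)
    (x : ℝ → EuclideanSpace ℝ (Fin n))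
    (hxcont : ContinuousOn x (Set.Ici 0))
    (hfejer : ∀ c ∈ C,
      AntitoneOn (fun t => h c - h (x t) - ⟪gh (x t), c - x t⟫) (Set.Ici 0))
    (tk : ℕ → ℝ) (htk0 : ∀ k, 0 ≤ tk k)
    (htk : Filter.Tendsto tk Filter.atTop Filter.atTop)
    (xstar : EuclideanSpace ℝ (Fin n)) (hxstar : xstar ∈ C)
    (hconv : Filter.Tendsto (fun k => x (tk k)) Filter.atTop (nhds xstar)) :
    Filter.Tendsto x Filter.atTop (nhds xstar) :=
  bregman_fejer_monotone_convergence_general n C h hh μ hμ hstrong gh hgrad x hfejer tk htk0 htk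
    xstar hxstar hconv
end

section
/- Let X ⊆ ℝⁿ be nonempty, closed, and convex, let h : ℝⁿ → ℝ be differentiable and convex, let F : X → ℝⁿ, and let η > 0. Suppose x ∈ X and y ∈ X satisfy the nonlinear proximal point relation ∇h(x) − ∇h(y) − ηF(y) ∈ N_X(y) (i.e., y = (∇h + ηF + N_X)⁻¹(∇h(x))), and suppose x̄ ∈ X satisfies ⟨F(y), y − x̄⟩ ≥ 0 (e.g., x̄ is variationally stable with respect to F). Then D_h(x̄, y) + D_h(y, x) ≤ D_h(x̄, x). -/
open scoped RealInnerProductSpace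

/-- (Nonlinear proximal point step.)  Let `X ⊆ ℝⁿ` be nonempty, closed,
convex, `h : ℝⁿ → ℝ` differentiable and convex, `F : X → ℝⁿ`, `η > 0`.  If `x, y ∈ X`
satisfy `∇h(x) - ∇h(y) - ηF(y) ∈ N_X(y)` and `x̄ ∈ X` satisfies `⟪F y, y - x̄⟫ ≥ 0`,
then `D_h(x̄, y) + D_h(y, x) ≤ D_h(x̄, x)`. -/
theorem proximal_point_bregman_inequality
    (n : ℕ) (X : Set (EuclideanSpace ℝ (Fin n)))
    (hXne : X.Nonempty) (hXcl : IsClosed X) (hXcv : Convex ℝ X)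
    (h : EuclideanSpace ℝ (Fin n) → ℝ)
    (gh : EuclideanSpace ℝ (Fin n) → EuclideanSpace ℝ (Fin n))
    (hgrad : ∀ w, HasGradientAt h (gh w) w)
    (hconv : ConvexOn ℝ Set.univ h)
    (F : EuclideanSpace ℝ (Fin n) → EuclideanSpace ℝ (Fin n))
    (η : ℝ) (hη : 0 < η)
    (x y : EuclideanSpace ℝ (Fin n)) (hx : x ∈ X) (hy : y ∈ X)
    (hNC : ∀ u ∈ X, ⟪gh x - gh y - η • F y, u - y⟫ ≤ 0)
    (xbar : EuclideanSpace ℝ (Fin n)) (hxbar : xbar ∈ X)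
    (hVS : 0 ≤ ⟪F y, y - xbar⟫) :
    (h xbar - h y - ⟪gh y, xbar - y⟫) + (h y - h x - ⟪gh x, y - x⟫) ≤
      h xbar - h x - ⟪gh x, xbar - x⟫ := by
  have h1 := hNC xbar hxbar
  have h2 : ⟪F y, y - xbar⟫ = -⟪F y, xbar - y⟫ := by
    rw [← inner_neg_right]; congr 1; abel
  simp only [inner_sub_left, real_inner_smul_left] at h1
  have h3 : ⟪gh x, xbar - x⟫ = ⟪gh x, xbar - y⟫ + ⟪gh x, y - x⟫ := by
    rw [← inner_add_right]; congr 1; abel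
  nlinarith [h1, hVS, h2, h3]
end

section
/- Let A, B : ℝⁿ → ℝⁿ with A + B σ̄-strongly monotone (σ̄ > 0) and B L̄-Lipschitz continuous (L̄ > 0), and let η > 0. Suppose x, y ∈ ℝⁿ satisfy the forward-backward relation y + ηA(y) = x − ηB(x), and x* ∈ ℝⁿ satisfies A(x*) + B(x*) = 0. Then, with Φ(y) = x − y = ηA(y) + ηB(x): ⟨Φ(y), y − x*⟩ + ‖y − x‖² = η⟨A(y) + B(x), y − x*⟩ + ‖y − x‖² ≥ ησ̄‖y − x*‖² − ηL̄‖y − x‖‖y − x*‖ + ‖y − x‖². -/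
open scoped RealInnerProductSpace

/-- For `A + B` `σ̄`-strongly monotone, `B` `L̄`-Lipschitz, `η > 0`, if
`y + ηA(y) = x - ηB(x)` (forward-backward relation) and `A(x*) + B(x*) = 0`, then with
`Φ(y) = x - y = ηA(y) + ηB(x)`:
`⟪Φ(y), y - x*⟫ + ‖y - x‖² = η⟪A(y) + B(x), y - x*⟫ + ‖y - x‖²
  ≥ ησ̄‖y - x*‖² - ηL̄‖y - x‖‖y - x*‖ + ‖y - x‖²`. -/
theorem forward_backward_relaxed_stability_bound
    (n : ℕ)
    (A B : EuclideanSpace ℝ (Fin n) → EuclideanSpace ℝ (Fin n))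
    (σbar : ℝ) (hσ : 0 < σbar)
    (hAB : ∀ x y, σbar * ‖x - y‖ ^ 2 ≤ ⟪(A x + B x) - (A y + B y), x - y⟫)
    (Lbar : ℝ) (hL : 0 < Lbar)
    (hB : ∀ x y, ‖B x - B y‖ ≤ Lbar * ‖x - y‖)
    (η : ℝ) (hη : 0 < η)
    (x y : EuclideanSpace ℝ (Fin n))
    (hFB : y + η • A y = x - η • B x)
    (xstar : EuclideanSpace ℝ (Fin n)) (hxstar : A xstar + B xstar = 0) :
    x - y = η • A y + η • B x ∧
      ⟪x - y, y - xstar⟫ + ‖y - x‖ ^ 2 = η * ⟪A y + B x, y - xstar⟫ + ‖y - x‖ ^ 2 ∧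
      η * σbar * ‖y - xstar‖ ^ 2 - η * Lbar * ‖y - x‖ * ‖y - xstar‖ + ‖y - x‖ ^ 2 ≤
        η * ⟪A y + B x, y - xstar⟫ + ‖y - x‖ ^ 2 := by
  have h1 : x - y = η • A y + η • B x := by
    have hx : x = (y + η • A y) + η • B x := eq_add_of_sub_eq hFB.symm
    conv_lhs => rw [hx]
    abel
  have h2 : ⟪x - y, y - xstar⟫ = η * ⟪A y + B x, y - xstar⟫ := by
    rw [h1, ← smul_add, real_inner_smul_left]
  have hmon := hAB y xstar
  have hsplit : A y + B x = ((A y + B y) - (A xstar + B xstar)) + (B x - B y) := by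
    rw [hxstar]; abel
  have hinner : ⟪A y + B x, y - xstar⟫ =
      ⟪(A y + B y) - (A xstar + B xstar), y - xstar⟫ + ⟪B x - B y, y - xstar⟫ := by
    rw [hsplit, inner_add_left]
  have habs : |⟪B x - B y, y - xstar⟫| ≤ Lbar * ‖x - y‖ * ‖y - xstar‖ := by
    calc |⟪B x - B y, y - xstar⟫| ≤ ‖B x - B y‖ * ‖y - xstar‖ := abs_real_inner_le_norm _ _
    _ ≤ Lbar * ‖x - y‖ * ‖y - xstar‖ := by
        apply mul_le_mul_of_nonneg_right (hB x y) (norm_nonneg _)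
  have hrev : ‖y - x‖ = ‖x - y‖ := norm_sub_rev _ _
  refine ⟨h1, by rw [h2], ?_⟩
  have hkey : σbar * ‖y - xstar‖ ^ 2 - Lbar * ‖x - y‖ * ‖y - xstar‖ ≤
      ⟪A y + B x, y - xstar⟫ := by
    rw [hinner]
    have := abs_le.mp habs
    linarith [this.1]
  rw [hrev]
  nlinarith [hkey, hη.le]
end

section
/- Let F : ℝⁿ → ℝⁿ be L-Lipschitz continuous (L > 0) and let ρ satisfy 0 ≤ ρ < 1/(4L). Set η₁ = 1/L. Then for every x ∈ ℝⁿ with F(x) ≠ 0, setting T(x) = x − η₁F(x), one has ‖T(x) − x‖² − ρη₁‖F(T(x))‖² > 0; equivalently, η₁‖F(x)‖² > ρ‖F(x − η₁F(x))‖². Hence the relaxed stability condition of target mirror descent holds under the weak Minty assumption ⟨F(x), x − x*⟩ ≥ −ρ‖F(x)‖² with ρ ∈ [0, 1/(4L)). -/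
open scoped RealInnerProductSpace

/-- Let `F : ℝⁿ → ℝⁿ` be `L`-Lipschitz (`L > 0`), `0 ≤ ρ < 1/(4L)`, and
`η₁ = 1/L`.  For every `x` with `F(x) ≠ 0`, setting `T(x) = x - η₁F(x)`, one has
`‖T(x) - x‖² - ρη₁‖F(T(x))‖² > 0`, equivalently `η₁‖F(x)‖² > ρ‖F(x - η₁F(x))‖²`.
This is the relaxed stability condition of TMD under the weak Minty assumption. -/
theorem weak_minty_relaxed_stability
    (n : ℕ)
    (F : EuclideanSpace ℝ (Fin n) → EuclideanSpace ℝ (Fin n))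
    (L : ℝ) (hL : 0 < L)
    (hF : ∀ x y, ‖F x - F y‖ ≤ L * ‖x - y‖)
    (ρ : ℝ) (hρ₀ : 0 ≤ ρ) (hρ₁ : ρ < 1 / (4 * L))
    (η₁ : ℝ) (hη₁ : η₁ = 1 / L) :
    ∀ x : EuclideanSpace ℝ (Fin n), F x ≠ 0 →
      0 < ‖(x - η₁ • F x) - x‖ ^ 2 - ρ * η₁ * ‖F (x - η₁ • F x)‖ ^ 2 ∧
      ρ * ‖F (x - η₁ • F x)‖ ^ 2 < η₁ * ‖F x‖ ^ 2 := by
  intro x hx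
  have hη : 0 < η₁ := by rw [hη₁]; positivity
  have hFx : 0 < ‖F x‖ := norm_pos_iff.mpr hx
  have hdiff : ‖(x - η₁ • F x) - x‖ = η₁ * ‖F x‖ := by
    have : (x - η₁ • F x) - x = -(η₁ • F x) := by abel
    rw [this, norm_neg, norm_smul, Real.norm_eq_abs, abs_of_pos hη]
  have hT : ‖F (x - η₁ • F x)‖ ≤ 2 * ‖F x‖ := by
    have h1 : ‖F (x - η₁ • F x) - F x‖ ≤ L * ‖(x - η₁ • F x) - x‖ := hF _ _
    rw [hdiff] at h1
    have h2 : L * (η₁ * ‖F x‖) = ‖F x‖ := by rw [hη₁]; field_simp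
    calc ‖F (x - η₁ • F x)‖ ≤ ‖F (x - η₁ • F x) - F x‖ + ‖F x‖ := by
          simpa using norm_add_le (F (x - η₁ • F x) - F x) (F x)
      _ ≤ ‖F x‖ + ‖F x‖ := by rw [h2] at h1; linarith
      _ = 2 * ‖F x‖ := by ring
  have key : ρ * ‖F (x - η₁ • F x)‖ ^ 2 < η₁ * ‖F x‖ ^ 2 := by
    have h3 : ρ * ‖F (x - η₁ • F x)‖ ^ 2 ≤ ρ * (2 * ‖F x‖) ^ 2 := by
      apply mul_le_mul_of_nonneg_left _ hρ₀
      exact pow_le_pow_left₀ (norm_nonneg _) hT 2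
    have h4 : ρ * (2 * ‖F x‖) ^ 2 < η₁ * ‖F x‖ ^ 2 := by
      have : ρ * 4 < η₁ := by
        rw [hη₁, lt_div_iff₀ hL]
        rw [lt_div_iff₀ (by positivity : (0:ℝ) < 4 * L)] at hρ₁
        nlinarith
      nlinarith [sq_nonneg ‖F x‖, pow_pos hFx 2]
    linarith
  refine ⟨?_, key⟩
  rw [hdiff, mul_pow]
  nlinarith
end
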